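/- There exists a universal constant C > 0 with the following property: if ω ∈ L²(ℝ²) is compactly supported and radially symmetric, i.e. ω(x) = ϕ(|x|) for some function ϕ, then the velocity u = K ∗ ω is essentially bounded and ‖u‖_{L^∞(ℝ²)} ≤ C ‖ω‖_{L²(ℝ²)}. -/

import Mathlib

/-!
Identify `ℝ²` with `ℂ`, where the kernel reads `K(z) = i / (2π z̄)`. Since `ω` and Lebesgue
measure are invariant under rotations, `u(ξ) = ∫ ω(y) ⟨K(ξ - ·)⟩_{|y|} dy`, where `⟨·⟩_ρ` is the
average over the circle of radius `ρ` about `0`. By the mean value property of holomorphic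
functions (applied to `w ↦ 1 / (ξ - w)` for `ρ < |ξ|`, and to `w ↦ w / (w ξ̄ - ρ²)`, which agrees
with `1 / (ξ̄ - w̄)` on the circle, for `ρ > |ξ|`), this average is `K(ξ)` inside and `0` outside,
so, as in Newton's shell theorem, `u(ξ) = K(ξ) ∫_{|y| < |ξ|} ω`. Cauchy–Schwarz on the disc then
gives `|u(ξ)| ≤ ‖ω‖₂ √π |ξ| / (2π |ξ|) = ‖ω‖₂ / (2√π)`.
-/

open MeasureTheory Real Metric Filter
open scoped ENNReal Topology

/-- The plane `ℝ²` with the Euclidean norm. -/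
noncomputable abbrev E2 : Type := EuclideanSpace ℝ (Fin 2)

/-- The 2D Biot–Savart kernel `K(x) = x^⊥ / (2π|x|²)`. -/
noncomputable def K2 (x : E2) : E2 :=
  (2 * Real.pi * ‖x‖ ^ 2)⁻¹ • (WithLp.equiv 2 (Fin 2 → ℝ)).symm ![-(x 1), x 0]

/-- The velocity field `u = K ∗ ω` obtained from a vorticity `ω` by the Biot–Savart law. -/
noncomputable def vel (ω : E2 → ℝ) (x : E2) : E2 := ∫ y, ω y • K2 (x - y)

open Complex ComplexConjugate

namespace Complex

theorem coe_rotation_circleExp (θ : ℝ) :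
    ⇑(rotation (Circle.exp θ)) = fun y : ℂ => exp (θ * I) * y := by
  ext1 y; rw [rotation_apply, Circle.coe_exp]

theorem measurePreserving_exp_mul_I_mul (θ : ℝ) :
    MeasurePreserving (fun y : ℂ => exp (θ * I) * y) volume volume :=
  coe_rotation_circleExp θ ▸ (rotation (Circle.exp θ)).measurePreserving

theorem integral_comp_exp_mul_I_mul {E : Type*} [NormedAddCommGroup E] [NormedSpace ℝ E]
    (g : ℂ → E) (θ : ℝ) : ∫ y, g (exp (θ * I) * y) = ∫ y, g y := by
  have := (rotation (Circle.exp θ)).measurePreserving.integral_comp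
    (rotation (Circle.exp θ)).toHomeomorph.measurableEmbedding g
  rwa [coe_rotation_circleExp] at this

theorem circleAverage_zero_norm_eq_integral_exp_mul {E : Type*} [NormedAddCommGroup E]
    [NormedSpace ℝ E] (g : ℂ → E) (y : ℂ) :
    circleAverage g 0 ‖y‖ = (2 * π)⁻¹ • ∫ θ in 0..2 * π, g (exp (θ * I) * y) := by
  rw [circleAverage_eq_integral_add y.arg]
  congr with θ
  rw [circleMap, zero_add, ofReal_add, add_mul, Complex.exp_add, mul_left_comm,
    norm_mul_exp_arg_mul_I]

theorem integral_eq_integral_circleAverage {E : Type*} [NormedAddCommGroup E] [NormedSpace ℝ E]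
    [CompleteSpace E] {g : ℂ → E} (hg : Integrable g) :
    ∫ y, g y = ∫ y : ℂ, circleAverage g 0 ‖y‖ := by
  set μ : Measure ℝ := volume.restrict (Set.Ioc 0 (2 * π))
  have hμ : μ.real Set.univ = 2 * π := by
    simp [μ, Measure.real, pi_nonneg]
  have hskew : MeasurePreserving (fun p : ℝ × ℂ => (p.1, exp (p.1 * I) * p.2))
      (μ.prod volume) (μ.prod volume) :=
    (MeasurePreserving.id μ).skew_product (by fun_prop)
      (ae_of_all _ fun θ => (measurePreserving_exp_mul_I_mul θ).map_eq)
  have hint : Integrable (Function.uncurry fun (θ : ℝ) (y : ℂ) => g (exp (θ * I) * y))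
      (μ.prod volume) :=
    hskew.integrable_comp_of_integrable (hg.comp_snd μ)
  calc ∫ y, g y = (2 * π)⁻¹ • ∫ _θ, (∫ y, g y) ∂μ := by
        rw [integral_const, hμ, smul_smul, inv_mul_cancel₀ two_pi_pos.ne', one_smul]
    _ = (2 * π)⁻¹ • ∫ θ : ℝ, (∫ y, g (exp (θ * I) * y)) ∂μ := by
        simp only [integral_comp_exp_mul_I_mul]
    _ = ∫ y : ℂ, (2 * π)⁻¹ • ∫ θ : ℝ, g (exp (θ * I) * y) ∂μ := by
        rw [integral_integral_swap hint, integral_smul]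
    _ = ∫ y : ℂ, circleAverage g 0 ‖y‖ := by
        simp only [circleAverage_zero_norm_eq_integral_exp_mul,
          intervalIntegral.integral_of_le two_pi_pos.le, μ]

end Complex

theorem norm_setIntegral_le_eLpNorm_two_mul_sqrt {α E : Type*} [MeasurableSpace α]
    [NormedAddCommGroup E] [NormedSpace ℝ E] {μ : Measure α} {f : α → E} (hf : MemLp f 2 μ)
    {s : Set α} (hs : μ s ≠ ∞) :
    ‖∫ x in s, f x ∂μ‖ ≤ (eLpNorm f 2 μ).toReal * √(μ.real s) := by
  have hle : ‖∫ x in s, f x ∂μ‖ₑ ≤ eLpNorm f 2 μ * μ s ^ (1 / 2 : ℝ) :=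
    calc ‖∫ x in s, f x ∂μ‖ₑ ≤ eLpNorm f 1 (μ.restrict s) := by
          rw [eLpNorm_one_eq_lintegral_enorm]; exact enorm_integral_le_lintegral_enorm f
      _ ≤ eLpNorm f 2 (μ.restrict s) * μ s ^ (1 / 2 : ℝ) := by
          convert eLpNorm_le_eLpNorm_mul_rpow_measure_univ (μ := μ.restrict s)
            (show (1 : ℝ≥0∞) ≤ 2 by norm_num) hf.1.restrict using 2
          rw [Measure.restrict_apply_univ]
          norm_num
      _ ≤ eLpNorm f 2 μ * μ s ^ (1 / 2 : ℝ) := by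
          gcongr ?_ * _; exact eLpNorm_restrict_le f 2 μ s
  have := ENNReal.toReal_mono (ENNReal.mul_ne_top hf.2.ne (by simp [hs])) hle
  rwa [toReal_enorm, ENNReal.toReal_mul, ← ENNReal.toReal_rpow, ← sqrt_eq_rpow] at this

noncomputable def Kc (z : ℂ) : ℂ := I * (2 * π * conj z)⁻¹

theorem K2_orthonormalBasisOneI_repr (z : ℂ) :
    K2 (orthonormalBasisOneI.repr z) = orthonormalBasisOneI.repr (Kc z) := by
  ext i
  fin_cases i <;> simp [K2, Kc, Complex.inv_re, Complex.inv_im, Complex.normSq_eq_norm_sq] <;>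
    field_simp

theorem norm_Kc (z : ℂ) : ‖Kc z‖ = (2 * π * ‖z‖)⁻¹ := by
  simp [Kc, abs_of_pos pi_pos]

theorem Kc_sub_eq (ξ w : ℂ) : Kc (ξ - w) = (I * (2 * π : ℂ)⁻¹) • conj (ξ - w)⁻¹ := by
  simp only [Kc, smul_eq_mul, map_inv₀, mul_inv]; ring

theorem Kc_sub_eq_mul_inv (ξ : ℂ) {w : ℂ} (hw : w ≠ 0) :
    Kc (ξ - w) = (I * (2 * π : ℂ)⁻¹) • (w * (conj ξ * w - (‖w‖ ^ 2 : ℝ))⁻¹) := by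
  rw [Kc_sub_eq, ofReal_pow, ← conj_mul', ← sub_mul, ← map_sub, map_inv₀]
  congr 1
  field_simp

theorem circleAverage_Kc_sub_of_lt {ξ : ℂ} {r : ℝ} (h : |r| < ‖ξ‖) :
    circleAverage (fun w => Kc (ξ - w)) 0 r = Kc ξ := by
  have hdiff : DifferentiableOn ℂ (fun w => (ξ - w)⁻¹) (closedBall 0 |r|) := fun w hw => by
    refine (((differentiableAt_const ξ).sub differentiableAt_id).inv ?_).differentiableWithinAt
    rw [mem_closedBall_zero_iff] at hw
    exact sub_ne_zero.2 (ne_of_apply_ne norm (by simp; linarith))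
  have hint : CircleIntegrable (fun w => (ξ - w)⁻¹) 0 r :=
    ContinuousOn.circleIntegrable' (hdiff.continuousOn.mono sphere_subset_closedBall)
  have hconj := (conjCLE.toContinuousLinearMap).circleAverage_comp_comm hint
  simp only [Function.comp_def, ContinuousLinearEquiv.coe_coe, conjCLE_apply] at hconj
  simp_rw [Kc_sub_eq, circleAverage_fun_smul, hconj,
    (hdiff.diffContOnCl_ball subset_rfl).circleAverage]
  simpa using (Kc_sub_eq ξ 0).symm

theorem circleAverage_Kc_sub_of_gt {ξ : ℂ} {r : ℝ} (h : ‖ξ‖ < |r|) :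
    circleAverage (fun w => Kc (ξ - w)) 0 r = 0 := by
  set g : ℂ → ℂ := fun w => (I * (2 * π : ℂ)⁻¹) • (w * (conj ξ * w - (|r| ^ 2 : ℝ))⁻¹)
  have hsphere : Set.EqOn (fun w => Kc (ξ - w)) g (sphere 0 |r|) := fun w hw => by
    rw [mem_sphere_zero_iff_norm] at hw
    dsimp only [g]
    rw [Kc_sub_eq_mul_inv ξ (norm_pos_iff.1 (hw ▸ (norm_nonneg ξ).trans_lt h)), hw]
  have hdiff : DifferentiableOn ℂ g (closedBall 0 |r|) := fun w hw => by
    rw [mem_closedBall_zero_iff] at hw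
    have : conj ξ * w - (|r| ^ 2 : ℝ) ≠ 0 := by
      refine sub_ne_zero.2 (ne_of_apply_ne norm (ne_of_lt ?_))
      simp only [norm_mul, RCLike.norm_conj, norm_real, norm_pow, norm_abs_eq_norm,
        Real.norm_eq_abs]
      nlinarith [norm_nonneg ξ]
    fun_prop (disch := assumption)
  rw [circleAverage_congr_sphere hsphere, (hdiff.diffContOnCl_ball subset_rfl).circleAverage]
  simp [g]

theorem integral_smul_Kc_sub_of_radial {ω : ℂ → ℝ} {ϕ : ℝ → ℝ} (hrad : ∀ z, ω z = ϕ ‖z‖)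
    (ξ : ℂ) (hint : Integrable fun y => ω y • Kc (ξ - y)) :
    ∫ y, ω y • Kc (ξ - y) = (∫ y in ball 0 ‖ξ‖, ω y) • Kc ξ := by
  have hsphere : ∀ᵐ y : ℂ, ‖y‖ ≠ ‖ξ‖ := by
    refine measure_mono_null (fun y hy => ?_) (Measure.addHaar_sphere volume (0 : ℂ) ‖ξ‖)
    simpa using hy
  rw [integral_eq_integral_circleAverage hint, ← integral_indicator measurableSet_ball,
    ← integral_smul_const]
  refine integral_congr_ae (hsphere.mono fun y hy => ?_)
  have hω : Set.EqOn (fun w => ω w • Kc (ξ - w)) (fun w => ω y • Kc (ξ - w)) (sphere 0 |‖y‖|) :=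
    fun w hw => by simp_all
  dsimp only
  rw [circleAverage_congr_sphere hω, circleAverage_fun_smul]
  rcases hy.lt_or_gt with hlt | hgt
  · rw [circleAverage_Kc_sub_of_lt (by rwa [abs_norm]),
      Set.indicator_of_mem (mem_ball_zero_iff.2 hlt)]
  · rw [circleAverage_Kc_sub_of_gt (by rwa [abs_norm]),
      Set.indicator_of_notMem (by simpa using hgt.le), smul_zero, zero_smul]

theorem norm_integral_smul_Kc_sub_le {ω : ℂ → ℝ} {ϕ : ℝ → ℝ} (hω : MemLp ω 2)
    (hrad : ∀ z, ω z = ϕ ‖z‖) (ξ : ℂ) :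
    ‖∫ y, ω y • Kc (ξ - y)‖ ≤ (2 * √π)⁻¹ * (eLpNorm ω 2 volume).toReal := by
  by_cases hint : Integrable fun y => ω y • Kc (ξ - y)
  swap
  · rw [integral_undef hint, norm_zero]; positivity
  set N := (eLpNorm ω 2 volume).toReal
  have hball : volume.real (ball (0 : ℂ) ‖ξ‖) = π * ‖ξ‖ ^ 2 := by
    simp [Measure.real, mul_comm]
  have hM := norm_setIntegral_le_eLpNorm_two_mul_sqrt hω (measure_ball_lt_top (x := (0 : ℂ))
    (r := ‖ξ‖)).ne
  rw [hball, sqrt_mul pi_nonneg, sqrt_sq (norm_nonneg ξ)] at hM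
  rw [integral_smul_Kc_sub_of_radial hrad ξ hint, norm_smul, norm_Kc]
  calc ‖∫ y in ball 0 ‖ξ‖, ω y‖ * (2 * π * ‖ξ‖)⁻¹ ≤ N * (√π * ‖ξ‖) * (2 * π * ‖ξ‖)⁻¹ := by
        gcongr
    _ ≤ (2 * √π)⁻¹ * N := by
        rcases (norm_nonneg ξ).eq_or_lt with hξ | hξ
        · rw [← hξ]; simp; positivity
        · field_simp
          rw [sq_sqrt pi_nonneg]

theorem vel_orthonormalBasisOneI_repr (ω : E2 → ℝ) (ξ : ℂ) :
    vel ω (orthonormalBasisOneI.repr ξ) =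
      orthonormalBasisOneI.repr (∫ y, ω (orthonormalBasisOneI.repr y) • Kc (ξ - y)) := by
  set e := orthonormalBasisOneI.repr
  rw [vel, ← orthonormalBasisOneI.measurePreserving_repr.integral_comp
    e.toHomeomorph.measurableEmbedding]
  refine (integral_congr_ae (ae_of_all _ fun y => ?_)).trans
    (e.toLinearIsometry.integral_comp_comm fun y => ω (e y) • Kc (ξ - y))
  change ω (e y) • K2 (e ξ - e y) = e (ω (e y) • Kc (ξ - y))
  rw [← map_sub, K2_orthonormalBasisOneI_repr, map_smul]

/-- there is a universal constant `C > 0` such that for every compactly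
supported, radially symmetric `ω ∈ L²(ℝ²)`, the velocity `u = K ∗ ω` is essentially
bounded with `‖u‖_{L^∞} ≤ C ‖ω‖_{L²}`. -/
theorem radial_velocity_bounded :
    ∃ C : ℝ, 0 < C ∧ ∀ (ω : E2 → ℝ) (ϕ : ℝ → ℝ),
      MemLp ω 2 volume → HasCompactSupport ω → (∀ x, ω x = ϕ ‖x‖) →
      ∀ᵐ x ∂(volume : Measure E2),
        ‖vel ω x‖ ≤ C * (eLpNorm ω 2 volume).toReal := by
  refine ⟨(2 * √π)⁻¹, by positivity, fun ω ϕ hω _ hrad => ae_of_all _ fun x => ?_⟩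
  obtain ⟨ξ, rfl⟩ := orthonormalBasisOneI.repr.surjective x
  have hmp := orthonormalBasisOneI.measurePreserving_repr
  rw [vel_orthonormalBasisOneI_repr, LinearIsometryEquiv.norm_map,
    ← eLpNorm_comp_measurePreserving hω.1 hmp]
  exact norm_integral_smul_Kc_sub_le (hω.comp_measurePreserving hmp)
    (fun z => by rw [Function.comp_apply, hrad, LinearIsometryEquiv.norm_map]) ξ
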